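/- For the (n+1)-dimensional solvable Leibniz algebra R_3 (with n ≥ 4), the space of derivations has dimension 3, spanned by: d_1 with d_1(e_1) = e_1, d_1(e_i) = (i-n)e_i for 2 ≤ i ≤ n-1; d_2 with d_2(x) = e_1, d_2(e_i) = -e_{i+1} for 2 ≤ i ≤ n-1; and d_3 with d_3(x) = e_n. -/
import Mathlib


/-- Coordinate of `u` at a natural-number index, zero out of range. -/
def cf {m : ℕ} (u : Fin m → ℂ) (j : ℕ) : ℂ := if h : j < m then u ⟨j, h⟩ else 0

/-- The `j`-th coordinate vector of `Fin m → ℂ` (0-based): `ev (n+1) (i-1)` is `e_i`,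
`ev (n+1) n` is `x`. -/
def ev (m j : ℕ) : Fin m → ℂ := fun k => if (k : ℕ) = j then 1 else 0

/-- The bracket of `R_3` on the basis `e_1, …, e_n, x`:
`[e_i,e_1] = e_{i+1}` (`2 ≤ i ≤ n-1`), `[x,e_1] = -e_1`, `[e_1,x] = e_1`,
`[e_i,x] = (i-n)·e_i` (`2 ≤ i ≤ n`), `[x,x] = e_n`, other products zero. -/
def r3br (n : ℕ) (u v : Fin (n + 1) → ℂ) : Fin (n + 1) → ℂ := fun k =>
  if (k : ℕ) = 0 then -(cf u n) * cf v 0 + cf u 0 * cf v n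
  else if (k : ℕ) < n then
    (if 2 ≤ (k : ℕ) then cf u ((k : ℕ) - 1) * cf v 0 else 0)
    + ((((k : ℕ) : ℂ) + 1) - (n : ℂ)) * cf u (k : ℕ) * cf v n
    + (if (k : ℕ) = n - 1 then cf u n * cf v n else 0)
  else 0

namespace R3Aux

lemma cf_apply {m : ℕ} (u : Fin m → ℂ) (c : ℕ) (hc : c < m) : cf u c = u ⟨c, hc⟩ :=
  dif_pos hc

lemma cf_add {m : ℕ} (u v : Fin m → ℂ) (j : ℕ) : cf (u + v) j = cf u j + cf v j := by
  unfold cf; split <;> simp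

lemma cf_smul {m : ℕ} (a : ℂ) (u : Fin m → ℂ) (j : ℕ) : cf (a • u) j = a * cf u j := by
  unfold cf; split <;> simp

lemma cf_neg {m : ℕ} (u : Fin m → ℂ) (j : ℕ) : cf (-u) j = -(cf u j) := by
  unfold cf; split <;> simp

lemma cf_zero {m : ℕ} (j : ℕ) : cf (0 : Fin m → ℂ) j = 0 := by
  unfold cf; split <;> simp

lemma cf_ev (m j a : ℕ) : cf (ev m j) a = if a = j ∧ a < m then 1 else 0 := by
  unfold cf ev
  split_ifs with h1 h2 h3 <;> simp_all <;> omega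

lemma cf_r3br (n : ℕ) (u v : Fin (n+1) → ℂ) (j : ℕ) :
    cf (r3br n u v) j =
      if j = 0 then -(cf u n) * cf v 0 + cf u 0 * cf v n
      else if j < n then
        (if 2 ≤ j then cf u (j - 1) * cf v 0 else 0)
        + (((j : ℂ) + 1) - (n : ℂ)) * cf u j * cf v n
        + (if j = n - 1 then cf u n * cf v n else 0)
      else 0 := by
  by_cases h : j < n + 1
  · rw [cf_apply _ j h]; rfl
  · rw [cf, dif_neg h]
    have h1 : ¬ j = 0 := by omega
    have h2 : ¬ j < n := by omega
    rw [if_neg h1, if_neg h2]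

lemma r3br_add_left (n : ℕ) (u u' v : Fin (n+1) → ℂ) :
    r3br n (u + u') v = r3br n u v + r3br n u' v := by
  funext k; simp only [r3br, Pi.add_apply, cf_add]; split_ifs <;> ring

lemma r3br_add_right (n : ℕ) (u v v' : Fin (n+1) → ℂ) :
    r3br n u (v + v') = r3br n u v + r3br n u v' := by
  funext k; simp only [r3br, Pi.add_apply, cf_add]; split_ifs <;> ring

lemma r3br_smul_left (n : ℕ) (a : ℂ) (u v : Fin (n+1) → ℂ) :
    r3br n (a • u) v = a • r3br n u v := by
  funext k; simp only [r3br, Pi.smul_apply, cf_smul, smul_eq_mul]; split_ifs <;> ring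

lemma r3br_smul_right (n : ℕ) (a : ℂ) (u v : Fin (n+1) → ℂ) :
    r3br n u (a • v) = a • r3br n u v := by
  funext k; simp only [r3br, Pi.smul_apply, cf_smul, smul_eq_mul]; split_ifs <;> ring

/-- D1 : diagonal map. -/
def d1map (n : ℕ) : (Fin (n + 1) → ℂ) →ₗ[ℂ] (Fin (n + 1) → ℂ) where
  toFun u := fun k => (if (k : ℕ) = 0 then 1 else if (k : ℕ) < n then (((k : ℕ) : ℂ) + 1 - n) else 0) * u k
  map_add' u v := by funext k; simp only [Pi.add_apply]; ring
  map_smul' a u := by funext k; simp only [Pi.smul_apply, smul_eq_mul, RingHom.id_apply]; ring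

def d2map (n : ℕ) : (Fin (n + 1) → ℂ) →ₗ[ℂ] (Fin (n + 1) → ℂ) where
  toFun u := fun k => if (k : ℕ) = 0 then cf u n
    else if 2 ≤ (k : ℕ) ∧ (k : ℕ) ≤ n - 1 then -(cf u ((k : ℕ) - 1)) else 0
  map_add' u v := by funext k; simp only [Pi.add_apply, cf_add]; split_ifs <;> ring
  map_smul' a u := by
    funext k; simp only [Pi.smul_apply, smul_eq_mul, RingHom.id_apply, cf_smul]
    split_ifs <;> ring

def d3map (n : ℕ) : (Fin (n + 1) → ℂ) →ₗ[ℂ] (Fin (n + 1) → ℂ) where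
  toFun u := fun k => if (k : ℕ) = n - 1 then cf u n else 0
  map_add' u v := by funext k; simp only [Pi.add_apply, cf_add]; split_ifs <;> ring
  map_smul' a u := by
    funext k; simp only [Pi.smul_apply, smul_eq_mul, RingHom.id_apply, cf_smul]
    split_ifs <;> ring

lemma cf_d1 (n : ℕ) (u : Fin (n+1) → ℂ) (j : ℕ) :
    cf (d1map n u) j =
      (if j = 0 then 1 else if j < n then ((j : ℂ) + 1 - n) else 0) * cf u j := by
  by_cases h : j < n + 1
  · rw [cf_apply _ j h, cf_apply _ j h]; rfl
  · rw [cf, dif_neg h, cf, dif_neg h, mul_zero]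

lemma cf_d2 (n : ℕ) (u : Fin (n+1) → ℂ) (j : ℕ) :
    cf (d2map n u) j =
      if j = 0 then cf u n
      else if 2 ≤ j ∧ j ≤ n - 1 then -(cf u (j - 1)) else 0 := by
  by_cases h : j < n + 1
  · rw [cf_apply _ j h]; rfl
  · rw [cf, dif_neg h]
    have h1 : ¬ j = 0 := by omega
    have h2 : ¬ (2 ≤ j ∧ j ≤ n - 1) := by omega
    rw [if_neg h1, if_neg h2]

lemma cf_d3 (n : ℕ) (u : Fin (n+1) → ℂ) (j : ℕ) (hn : 1 ≤ n) :
    cf (d3map n u) j = if j = n - 1 then cf u n else 0 := by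
  by_cases h : j < n + 1
  · rw [cf_apply _ j h]; rfl
  · rw [cf, dif_neg h]
    have h1 : ¬ j = n - 1 := by omega
    rw [if_neg h1]


lemma ext_cf {m : ℕ} {u v : Fin m → ℂ} (h : ∀ j, cf u j = cf v j) : u = v := by
  funext k
  have := h k
  rwa [cf_apply _ _ k.isLt, cf_apply _ _ k.isLt] at this

lemma der1 (n : ℕ) (hn : 4 ≤ n) (u v : Fin (n+1) → ℂ) :
    d1map n (r3br n u v) = r3br n (d1map n u) v + r3br n u (d1map n v) := by
  apply ext_cf; intro j
  rw [cf_add]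
  simp only [cf_d1, cf_r3br]
  have hn0 : ¬ (n = 0) := by omega
  have hnn : ¬ (n < n) := lt_irrefl n
  rcases (by omega : j = 0 ∨ j = 1 ∨ (2 ≤ j ∧ j + 2 ≤ n) ∨ j = n - 1 ∨ n ≤ j) with
    rfl | rfl | ⟨h2, h3⟩ | rfl | hge
  · simp only [if_pos rfl, if_neg hn0, if_neg hnn]
    try simp only [if_true]
    ring
  · have c1 : ¬ (1 = 0) := one_ne_zero
    have c2 : (1:ℕ) < n := by omega
    have c3 : ¬ (2 ≤ 1) := by omega
    have c4 : ¬ (1 = n - 1) := by omega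
    simp only [if_neg c1, if_pos c2, if_neg c3, if_neg c4, if_pos rfl, if_neg hn0, if_neg hnn]
    push_cast
    try simp only [if_true]
    ring
  · obtain ⟨t, rfl⟩ : ∃ t, j = t + 2 := ⟨j - 2, by omega⟩
    have c1 : ¬ (t + 2 = 0) := by omega
    have c2 : t + 2 < n := by omega
    have c3 : (2:ℕ) ≤ t + 2 := by omega
    have c4 : ¬ (t + 2 = n - 1) := by omega
    have c5 : ¬ (t + 1 = 0) := by omega
    have c6 : t + 1 < n := by omega
    simp only [show t + 2 - 1 = t + 1 from rfl, if_neg c1, if_pos c2, if_pos c3, if_neg c4,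
      if_neg c5, if_pos c6, if_pos rfl, if_neg hn0, if_neg hnn]
    push_cast
    try simp only [if_true]
    ring
  · have c1 : ¬ (n - 1 = 0) := by omega
    have c2 : n - 1 < n := by omega
    have c3 : (2:ℕ) ≤ n - 1 := by omega
    have c5 : ¬ (n - 2 = 0) := by omega
    have c6 : n - 2 < n := by omega
    have e1 : n - 1 - 1 = n - 2 := by omega
    have e2 : ((n - 1 : ℕ) : ℂ) = (n : ℂ) - 1 := by
      rw [Nat.cast_sub (by omega)]; norm_num
    have e3 : ((n - 2 : ℕ) : ℂ) = (n : ℂ) - 2 := by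
      rw [Nat.cast_sub (by omega)]; norm_num
    simp only [e1, if_neg c1, if_pos c2, if_pos c3, if_pos rfl, if_neg c5, if_pos c6,
      if_neg hn0, if_neg hnn, e2, e3]
    try simp only [if_true]
    ring
  · have c1 : ¬ (j = 0) := by omega
    have c2 : ¬ (j < n) := by omega
    simp only [if_neg c1, if_neg c2]
    try simp only [if_true]
    ring

lemma der2 (n : ℕ) (hn : 4 ≤ n) (u v : Fin (n+1) → ℂ) :
    d2map n (r3br n u v) = r3br n (d2map n u) v + r3br n u (d2map n v) := by
  apply ext_cf; intro j
  rw [cf_add]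
  simp only [cf_d2, cf_r3br]
  have hn0 : ¬ (n = 0) := by omega
  have hnn : ¬ (n < n) := lt_irrefl n
  have hnN : ¬ (2 ≤ n ∧ n ≤ n - 1) := by omega
  have h00 : ¬ (2 ≤ 0 ∧ (0:ℕ) ≤ n - 1) := by omega
  rcases (by omega : j = 0 ∨ j = 1 ∨ j = 2 ∨ (3 ≤ j ∧ j + 2 ≤ n) ∨ j = n - 1 ∨ n ≤ j) with
    rfl | rfl | rfl | ⟨h2, h3⟩ | rfl | hge
  · simp only [if_pos rfl, if_neg hn0, if_neg hnn, if_neg hnN, if_neg h00]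
    try simp only [if_true]
    ring
  · have c1 : ¬ ((1:ℕ) = 0) := one_ne_zero
    have c2 : (1:ℕ) < n := by omega
    have c3 : ¬ (2 ≤ 1) := by omega
    have c4 : ¬ ((1:ℕ) = n - 1) := by omega
    have c5 : ¬ (2 ≤ 1 ∧ (1:ℕ) ≤ n - 1) := by omega
    simp only [if_neg c1, if_pos c2, if_neg c3, if_neg c4, if_neg c5, if_pos rfl,
      if_neg hn0, if_neg hnn, if_neg hnN, if_neg h00]
    try simp only [if_true]
    ring
  · have c1 : ¬ ((2:ℕ) = 0) := by omega
    have c2 : (2:ℕ) < n := by omega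
    have c3 : (2:ℕ) ≤ 2 := le_refl 2
    have c4 : ¬ ((2:ℕ) = n - 1) := by omega
    have c5 : (2 ≤ 2 ∧ (2:ℕ) ≤ n - 1) := by omega
    have d1' : ¬ ((1:ℕ) = 0) := one_ne_zero
    have d2' : (1:ℕ) < n := by omega
    have d3' : ¬ (2 ≤ 1) := by omega
    have d4' : ¬ ((1:ℕ) = n - 1) := by omega
    have d5' : ¬ (2 ≤ 1 ∧ (1:ℕ) ≤ n - 1) := by omega
    simp only [show (2:ℕ) - 1 = 1 from rfl, if_neg c1, if_pos c2, if_pos c3, if_neg c4,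
      if_pos c5, if_neg d1', if_pos d2', if_neg d3', if_neg d4', if_neg d5', if_pos rfl,
      if_neg hn0, if_neg hnn, if_neg hnN, if_neg h00]
    push_cast
    try simp only [if_true]
    ring
  · obtain ⟨t, rfl⟩ : ∃ t, j = t + 3 := ⟨j - 3, by omega⟩
    have c1 : ¬ (t + 3 = 0) := by omega
    have c2 : t + 3 < n := by omega
    have c3 : (2:ℕ) ≤ t + 3 := by omega
    have c4 : ¬ (t + 3 = n - 1) := by omega
    have c5 : (2 ≤ t + 3 ∧ t + 3 ≤ n - 1) := by omega
    have d1' : ¬ (t + 2 = 0) := by omega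
    have d2' : t + 2 < n := by omega
    have d3' : (2:ℕ) ≤ t + 2 := by omega
    have d4' : ¬ (t + 2 = n - 1) := by omega
    have d5' : (2 ≤ t + 2 ∧ t + 2 ≤ n - 1) := by omega
    simp only [show t + 3 - 1 = t + 2 from rfl, show t + 2 - 1 = t + 1 from rfl,
      if_neg c1, if_pos c2, if_pos c3, if_neg c4, if_pos c5,
      if_neg d1', if_pos d2', if_pos d3', if_neg d4', if_pos d5', if_pos rfl,
      if_neg hn0, if_neg hnn, if_neg hnN, if_neg h00]
    push_cast
    try simp only [if_true]
    ring
  · have c1 : ¬ (n - 1 = 0) := by omega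
    have c2 : n - 1 < n := by omega
    have c3 : (2:ℕ) ≤ n - 1 := by omega
    have c5 : (2 ≤ n - 1 ∧ n - 1 ≤ n - 1) := by omega
    have d1' : ¬ (n - 2 = 0) := by omega
    have d2' : n - 2 < n := by omega
    have d3' : (2:ℕ) ≤ n - 2 := by omega
    have d4' : ¬ (n - 2 = n - 1) := by omega
    have d5' : (2 ≤ n - 2 ∧ n - 2 ≤ n - 1) := by omega
    have e1 : n - 1 - 1 = n - 2 := by omega
    have e2 : n - 2 - 1 = n - 3 := by omega
    have f2 : ((n - 1 : ℕ) : ℂ) = (n : ℂ) - 1 := by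
      rw [Nat.cast_sub (by omega)]; norm_num
    have f3 : ((n - 2 : ℕ) : ℂ) = (n : ℂ) - 2 := by
      rw [Nat.cast_sub (by omega)]; norm_num
    simp only [e1, e2, if_neg c1, if_pos c2, if_pos c3, if_pos rfl, if_pos c5,
      if_neg d1', if_pos d2', if_pos d3', if_neg d4', if_pos d5',
      if_neg hn0, if_neg hnn, if_neg hnN, if_neg h00, f2, f3]
    try simp only [if_true]
    ring
  · have c1 : ¬ (j = 0) := by omega
    have c2 : ¬ (j < n) := by omega
    have c5 : ¬ (2 ≤ j ∧ j ≤ n - 1) := by omega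
    simp only [if_neg c1, if_neg c2, if_neg c5]
    try simp only [if_true]
    ring

lemma der3 (n : ℕ) (hn : 4 ≤ n) (u v : Fin (n+1) → ℂ) :
    d3map n (r3br n u v) = r3br n (d3map n u) v + r3br n u (d3map n v) := by
  apply ext_cf; intro j
  rw [cf_add]
  simp only [cf_d3 n _ _ (by omega : 1 ≤ n), cf_r3br]
  have hn0 : ¬ (n = 0) := by omega
  have hnn : ¬ (n < n) := lt_irrefl n
  have hN1 : ¬ (n = n - 1) := by omega
  have h01 : ¬ ((0:ℕ) = n - 1) := by omega
  rcases (by omega : j = 0 ∨ (1 ≤ j ∧ j + 2 ≤ n) ∨ j = n - 1 ∨ n ≤ j) with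
    rfl | ⟨h1, h2⟩ | rfl | hge
  · simp only [if_pos rfl, if_neg hn0, if_neg hnn, if_neg hN1, if_neg h01]
    try simp only [if_true]
    ring
  · have c1 : ¬ (j = 0) := by omega
    have c2 : j < n := by omega
    have c4 : ¬ (j = n - 1) := by omega
    have c6 : ¬ (j - 1 = n - 1) := by omega
    simp only [if_neg c1, if_pos c2, if_neg c4, if_neg c6, if_pos rfl,
      if_neg hn0, if_neg hnn, if_neg hN1, if_neg h01]
    split_ifs <;> ring
  · have c1 : ¬ (n - 1 = 0) := by omega
    have c2 : n - 1 < n := by omega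
    have c3 : (2:ℕ) ≤ n - 1 := by omega
    have c6 : ¬ (n - 1 - 1 = n - 1) := by omega
    have f2 : ((n - 1 : ℕ) : ℂ) = (n : ℂ) - 1 := by
      rw [Nat.cast_sub (by omega)]; norm_num
    simp only [if_neg c1, if_pos c2, if_pos c3, if_pos rfl, if_neg c6,
      if_neg hn0, if_neg hnn, if_neg hN1, if_neg h01, f2]
    try simp only [if_true]
    ring
  · have c1 : ¬ (j = 0) := by omega
    have c2 : ¬ (j < n) := by omega
    have c4 : ¬ (j = n - 1) := by omega
    simp only [if_neg c1, if_neg c2, if_neg c4]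
    try simp only [if_true]
    ring


lemma cf_ge {m : ℕ} (u : Fin m → ℂ) {j : ℕ} (h : m ≤ j) : cf u j = 0 :=
  dif_neg (by omega)

section cfr
variable {n : ℕ} (hn : 4 ≤ n)
include hn

lemma cfr_ev0_right (u : Fin (n+1) → ℂ) (c : ℕ) :
    cf (r3br n u (ev (n+1) 0)) c =
      if c = 0 then -(cf u n) else if c < n ∧ 2 ≤ c then cf u (c-1) else 0 := by
  obtain ⟨m, rfl⟩ : ∃ m, n = m + 4 := ⟨n - 4, by omega⟩
  rw [cf_r3br]
  simp only [cf_ev, true_and, and_true, false_and, and_false, if_true, if_false,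
    show m+4-1 = m+3 from rfl]
  split_ifs <;> first | ring1 | (exfalso; omega) | (exact (‹False ∧ _›).1.elim) | (push_cast; all_goals ring1) |
    (subst_vars; push_cast; all_goals ring1)

lemma cfr_evn_right (u : Fin (n+1) → ℂ) (c : ℕ) :
    cf (r3br n u (ev (n+1) n)) c =
      if c = 0 then cf u 0
      else if c < n then ((c:ℂ)+1-(n:ℂ)) * cf u c + (if c = n-1 then cf u n else 0)
      else 0 := by
  obtain ⟨m, rfl⟩ : ∃ m, n = m + 4 := ⟨n - 4, by omega⟩
  rw [cf_r3br]
  simp only [cf_ev, true_and, and_true, false_and, and_false, if_true, if_false,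
    show m+4-1 = m+3 from rfl]
  split_ifs <;> first | ring1 | (exfalso; omega) | (exact (‹False ∧ _›).1.elim) | (push_cast; all_goals ring1) |
    (subst_vars; push_cast; all_goals ring1)

lemma cfr_ev0_left (v : Fin (n+1) → ℂ) (c : ℕ) :
    cf (r3br n (ev (n+1) 0) v) c = if c = 0 then cf v n else 0 := by
  obtain ⟨m, rfl⟩ : ∃ m, n = m + 4 := ⟨n - 4, by omega⟩
  rw [cf_r3br]
  simp only [cf_ev, true_and, and_true, false_and, and_false, if_true, if_false,
    show m+4-1 = m+3 from rfl]
  split_ifs <;> first | ring1 | (exfalso; omega) | (exact (‹False ∧ _›).1.elim) | (push_cast; all_goals ring1) |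
    (subst_vars; push_cast; all_goals ring1)

lemma cfr_evn_left (v : Fin (n+1) → ℂ) (c : ℕ) :
    cf (r3br n (ev (n+1) n) v) c =
      if c = 0 then -(cf v 0) else if c = n-1 then cf v n else 0 := by
  obtain ⟨m, rfl⟩ : ∃ m, n = m + 4 := ⟨n - 4, by omega⟩
  rw [cf_r3br]
  simp only [cf_ev, true_and, and_true, false_and, and_false, if_true, if_false,
    show m+4-1 = m+3 from rfl]
  split_ifs <;> first | ring1 | (exfalso; omega) | (exact (‹False ∧ _›).1.elim) | (push_cast; all_goals ring1) |
    (subst_vars; push_cast; all_goals ring1)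

lemma cfr_evj_left (j : ℕ) (h1 : 1 ≤ j) (h2 : j ≤ n-1)
    (v : Fin (n+1) → ℂ) (c : ℕ) :
    cf (r3br n (ev (n+1) j) v) c =
      if c = j+1 ∧ c < n then cf v 0
      else if c = j then ((j:ℂ)+1-(n:ℂ)) * cf v n else 0 := by
  obtain ⟨m, rfl⟩ : ∃ m, n = m + 4 := ⟨n - 4, by omega⟩
  rw [cf_r3br]
  simp only [cf_ev, true_and, and_true, false_and, and_false, if_true, if_false,
    show m+4-1 = m+3 from rfl]
  split_ifs <;> first | ring1 | (exfalso; omega) | (exact (‹False ∧ _›).1.elim) | (push_cast; all_goals ring1) |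
    (subst_vars; push_cast; all_goals ring1) |
    (obtain rfl : j = m + 3 := (by omega); push_cast; ring1) |
    (obtain rfl : c = j := (by omega); push_cast; ring1)

/-- basis bracket values -/
lemma br0n : r3br n (ev (n+1) 0) (ev (n+1) n) = ev (n+1) 0 := by
  apply ext_cf; intro c
  rw [cfr_ev0_left hn, cf_ev, cf_ev]
  split_ifs <;> first | ring1 | (exfalso; omega) | (exact (‹False ∧ _›).1.elim)

lemma brn0 : r3br n (ev (n+1) n) (ev (n+1) 0) = -(ev (n+1) 0) := by
  apply ext_cf; intro c
  rw [cfr_evn_left hn, cf_neg, cf_ev, cf_ev, cf_ev]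
  split_ifs <;> first | ring1 | (exfalso; omega) | (exact (‹False ∧ _›).1.elim)

lemma brnn : r3br n (ev (n+1) n) (ev (n+1) n) = ev (n+1) (n-1) := by
  apply ext_cf; intro c
  rw [cfr_evn_left hn, cf_ev, cf_ev, cf_ev]
  split_ifs <;> first | ring1 | (exfalso; omega) | (exact (‹False ∧ _›).1.elim)

lemma brnj (j : ℕ) (h1 : 1 ≤ j) (h2 : j ≤ n-1) :
    r3br n (ev (n+1) n) (ev (n+1) j) = 0 := by
  apply ext_cf; intro c
  rw [cfr_evn_left hn, cf_zero, cf_ev, cf_ev]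
  split_ifs <;> first | ring1 | (exfalso; omega) | (exact (‹False ∧ _›).1.elim)

lemma br0j (j : ℕ) (h1 : 1 ≤ j) (h2 : j ≤ n-1) :
    r3br n (ev (n+1) 0) (ev (n+1) j) = 0 := by
  apply ext_cf; intro c
  rw [cfr_ev0_left hn, cf_zero, cf_ev]
  split_ifs <;> first | ring1 | (exfalso; omega) | (exact (‹False ∧ _›).1.elim)

lemma brj0 (j : ℕ) (h1 : 1 ≤ j) (h2 : j ≤ n-2) :
    r3br n (ev (n+1) j) (ev (n+1) 0) = ev (n+1) (j+1) := by
  apply ext_cf; intro c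
  rw [cfr_evj_left hn j h1 (by omega), cf_ev, cf_ev, cf_ev]
  split_ifs <;> first | ring1 | (exfalso; omega) | (exact (‹False ∧ _›).1.elim)

lemma brl0 : r3br n (ev (n+1) (n-1)) (ev (n+1) 0) = 0 := by
  apply ext_cf; intro c
  rw [cfr_evj_left hn (n-1) (by omega) (by omega), cf_zero, cf_ev, cf_ev]
  split_ifs <;> first | ring1 | (exfalso; omega) | (exact (‹False ∧ _›).1.elim) |
    (rw [Nat.cast_sub (by omega : 1 ≤ n)]; push_cast; all_goals ring1)

lemma brjn (j : ℕ) (h1 : 1 ≤ j) (h2 : j ≤ n-1) :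
    r3br n (ev (n+1) j) (ev (n+1) n) = (((j:ℂ)+1-(n:ℂ))) • ev (n+1) j := by
  apply ext_cf; intro c
  rw [cfr_evj_left hn j h1 h2, cf_smul, cf_ev, cf_ev, cf_ev]
  split_ifs <;> first | ring1 | (exfalso; omega) | (exact (‹False ∧ _›).1.elim)

lemma brjk (j k : ℕ) (h1 : 1 ≤ j) (h2 : j ≤ n-1) (h3 : 1 ≤ k) (h4 : k ≤ n-1) :
    r3br n (ev (n+1) j) (ev (n+1) k) = 0 := by
  apply ext_cf; intro c
  rw [cfr_evj_left hn j h1 h2, cf_zero, cf_ev, cf_ev]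
  split_ifs <;> first | ring1 | (exfalso; omega) | (exact (‹False ∧ _›).1.elim)

lemma d1_ev0 : d1map n (ev (n+1) 0) = ev (n+1) 0 := by
  apply ext_cf; intro c
  simp only [cf_d1, cf_ev, true_and, and_true, false_and, and_false, if_true, if_false]
  split_ifs <;> first | ring1 | (exfalso; omega)

lemma d1_evj (j : ℕ) (h1 : 1 ≤ j) (h2 : j ≤ n-2) :
    d1map n (ev (n+1) j) = ((j:ℂ)+1-(n:ℂ)) • ev (n+1) j := by
  apply ext_cf; intro c
  simp only [cf_d1, cf_smul, cf_ev, true_and, and_true, false_and, and_false, if_true, if_false]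
  split_ifs <;> first | ring1 | (exfalso; omega) |
    (obtain rfl : c = j := (by omega); push_cast; ring1)

lemma d1_evl : d1map n (ev (n+1) (n-1)) = 0 := by
  obtain ⟨m, rfl⟩ : ∃ m, n = m + 4 := ⟨n - 4, by omega⟩
  apply ext_cf; intro c
  simp only [cf_d1, cf_zero, cf_ev, show m+4-1 = m+3 from rfl, true_and, and_true, false_and, and_false, if_true, if_false]
  split_ifs <;> first | ring1 | (exfalso; omega) | (push_cast; all_goals ring1) |
    (obtain rfl : c = m+3 := (by omega); push_cast; ring1)

lemma d1_evn : d1map n (ev (n+1) n) = 0 := by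
  apply ext_cf; intro c
  simp only [cf_d1, cf_zero, cf_ev]
  split_ifs <;> first | ring1 | (exfalso; omega)

lemma d2_ev0 : d2map n (ev (n+1) 0) = 0 := by
  apply ext_cf; intro c
  simp only [cf_d2, cf_zero, cf_ev, true_and, and_true, false_and, and_false, if_true, if_false]
  split_ifs <;> first | ring1 | (exfalso; omega)

lemma d2_evj (j : ℕ) (h1 : 1 ≤ j) (h2 : j ≤ n-2) :
    d2map n (ev (n+1) j) = -(ev (n+1) (j+1)) := by
  apply ext_cf; intro c
  simp only [cf_d2, cf_neg, cf_ev, true_and, and_true, false_and, and_false, if_true, if_false]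
  split_ifs <;> first | ring1 | (exfalso; omega)

lemma d2_evl : d2map n (ev (n+1) (n-1)) = 0 := by
  apply ext_cf; intro c
  simp only [cf_d2, cf_zero, cf_ev, true_and, and_true, false_and, and_false, if_true, if_false]
  split_ifs <;> first | ring1 | (exfalso; omega)

lemma d2_evn : d2map n (ev (n+1) n) = ev (n+1) 0 := by
  apply ext_cf; intro c
  simp only [cf_d2, cf_ev, true_and, and_true, false_and, and_false, if_true, if_false]
  split_ifs <;> first | ring1 | (exfalso; omega)

lemma d3_evj (j : ℕ) (h : j ≤ n-1) : d3map n (ev (n+1) j) = 0 := by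
  apply ext_cf; intro c
  simp only [cf_d3 n _ _ (by omega : 1 ≤ n), cf_zero, cf_ev, true_and, and_true, false_and, and_false, if_true, if_false]
  split_ifs <;> first | ring1 | (exfalso; omega)

lemma d3_evn : d3map n (ev (n+1) n) = ev (n+1) (n-1) := by
  apply ext_cf; intro c
  simp only [cf_d3 n _ _ (by omega : 1 ≤ n), cf_ev, true_and, and_true, false_and, and_false, if_true, if_false]
  split_ifs <;> first | ring1 | (exfalso; omega)

end cfr

lemma ev_decomp (n : ℕ) (u : Fin (n+1) → ℂ) :
    u = ∑ j : Fin (n+1), u j • ev (n+1) (j : ℕ) := by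
  funext k
  rw [Finset.sum_apply]
  symm
  rw [Finset.sum_eq_single k]
  · simp [ev]
  · intro b _ hb
    have : (k : ℕ) ≠ (b : ℕ) := fun h => hb (Fin.val_injective h).symm
    simp [ev, this]
  · intro h; exact absurd (Finset.mem_univ k) h

section classify
variable {n : ℕ} (hn : 4 ≤ n)
include hn

lemma classify (d : (Fin (n+1) → ℂ) →ₗ[ℂ] (Fin (n+1) → ℂ))
    (hd : ∀ a b, d (r3br n a b) = r3br n (d a) b + r3br n a (d b)) :
    d = cf (d (ev (n+1) 0)) 0 • d1map n + cf (d (ev (n+1) n)) 0 • d2map n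
        + cf (d (ev (n+1) n)) (n-1) • d3map n := by
  set α := cf (d (ev (n+1) 0)) 0 with hαdef
  set β := cf (d (ev (n+1) n)) 0 with hβdef
  set γ := cf (d (ev (n+1) n)) (n-1) with hγdef
  -- equation family from (e1, x)
  have h2 : ∀ c : ℕ, cf (d (ev (n+1) 0)) c =
      (if c = 0 then cf (d (ev (n+1) 0)) 0
       else if c < n then ((c:ℂ)+1-(n:ℂ)) * cf (d (ev (n+1) 0)) c
          + (if c = n-1 then cf (d (ev (n+1) 0)) n else 0)
       else 0)
      + (if c = 0 then cf (d (ev (n+1) n)) n else 0) := by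
    intro c
    have H := hd (ev (n+1) 0) (ev (n+1) n)
    rw [br0n hn] at H
    have H2 := congrArg (fun w => cf w c) H
    simpa only [cf_add, cfr_evn_right hn, cfr_ev0_left hn] using H2
  have hXn : cf (d (ev (n+1) n)) n = 0 := by
    have h := h2 0
    rw [if_pos rfl, if_pos rfl] at h
    linear_combination -h
  have hAn : cf (d (ev (n+1) 0)) n = 0 := by
    have h := h2 n
    rw [if_neg (by omega), if_neg (by omega), if_neg (by omega)] at h
    simpa using h
  have hA1 : ∀ c, 1 ≤ c → c ≤ n-2 → cf (d (ev (n+1) 0)) c = 0 := by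
    intro c h1c h2c
    have h := h2 c
    rw [if_neg (by omega), if_pos (by omega), if_neg (by omega), if_neg (by omega)] at h
    have hne : (n:ℂ) - (c:ℂ) ≠ 0 := by
      intro hh
      have : (n:ℂ) = (c:ℂ) := by linear_combination hh
      exact (by omega : ¬ n = c) (Nat.cast_injective this)
    have h0 : ((n:ℂ) - (c:ℂ)) * cf (d (ev (n+1) 0)) c = 0 := by linear_combination h
    rcases mul_eq_zero.mp h0 with h' | h'
    · exact absurd h' hne
    · exact h'
  have hAl : cf (d (ev (n+1) 0)) (n-1) = 0 := by
    have h := h2 (n-1)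
    rw [if_neg (by omega), if_pos (by omega), if_pos rfl, if_neg (by omega), hAn] at h
    have hc : (((n-1:ℕ):ℂ)+1-(n:ℂ)) = 0 := by
      rw [Nat.cast_sub (by omega : 1 ≤ n)]; ring
    rw [hc] at h
    simpa using h
  have hA : d (ev (n+1) 0) = α • ev (n+1) 0 := by
    apply ext_cf; intro c
    rw [cf_smul, cf_ev]
    rcases (by omega : c = 0 ∨ (1 ≤ c ∧ c ≤ n-2) ∨ c = n-1 ∨ c = n ∨ n+1 ≤ c) with
      rfl | ⟨hc1, hc2⟩ | rfl | rfl | hge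
    · rw [if_pos ⟨rfl, by omega⟩, mul_one]
    · rw [hA1 c hc1 hc2, if_neg (by omega)]; ring
    · rw [hAl, if_neg (by omega)]; ring
    · rw [hAn, if_neg (by omega)]; ring
    · rw [cf_ge _ (by omega : n+1 ≤ c), if_neg (by omega)]; ring
  -- equation family from (x, e1)
  have h3 : ∀ c, 2 ≤ c → c ≤ n-1 → cf (d (ev (n+1) n)) (c-1) = 0 := by
    intro c h1c h2c
    have H := hd (ev (n+1) n) (ev (n+1) 0)
    rw [brn0 hn, map_neg] at H
    have H2 := congrArg (fun w => cf w c) H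
    simp only [cf_add, cf_neg, cfr_ev0_right hn, cfr_evn_left hn] at H2
    rw [if_neg (by omega), if_pos (by omega : c < n ∧ 2 ≤ c), if_neg (by omega)] at H2
    have hac : cf (d (ev (n+1) 0)) c = 0 := by
      rcases (by omega : c ≤ n-2 ∨ c = n-1) with h' | h'
      · exact hA1 c (by omega) h'
      · rw [h']; exact hAl
    by_cases hc : c = n-1
    · rw [if_pos hc, hAn, hac] at H2; linear_combination -H2
    · rw [if_neg hc, hac] at H2; linear_combination -H2
  have hD : d (ev (n+1) n) = β • ev (n+1) 0 + γ • ev (n+1) (n-1) := by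
    apply ext_cf; intro c
    rw [cf_add, cf_smul, cf_smul, cf_ev, cf_ev]
    rcases (by omega : c = 0 ∨ (1 ≤ c ∧ c ≤ n-2) ∨ c = n-1 ∨ c = n ∨ n+1 ≤ c) with
      rfl | ⟨hc1, hc2⟩ | rfl | rfl | hge
    · rw [if_pos ⟨rfl, by omega⟩, if_neg (by omega)]; ring
    · have h := h3 (c+1) (by omega) (by omega)
      rw [Nat.add_sub_cancel] at h
      rw [h, if_neg (by omega), if_neg (by omega)]; ring
    · rw [if_neg (by omega), if_pos ⟨rfl, by omega⟩]; ring
    · rw [hXn, if_neg (by omega), if_neg (by omega)]; ring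
    · rw [cf_ge _ (by omega : n+1 ≤ c), if_neg (by omega), if_neg (by omega)]; ring
  -- (x,x) gives d e_n = 0
  have hC : d (ev (n+1) (n-1)) = 0 := by
    have H := hd (ev (n+1) n) (ev (n+1) n)
    rw [brnn hn, hD, r3br_add_left, r3br_smul_left, r3br_smul_left,
      r3br_add_right, r3br_smul_right, r3br_smul_right, br0n hn,
      brjn hn (n-1) (by omega) (by omega), brn0 hn,
      brnj hn (n-1) (by omega) (by omega)] at H
    have hc0 : (((n-1:ℕ):ℂ)+1-(n:ℂ)) = 0 := by
      rw [Nat.cast_sub (by omega : 1 ≤ n)]; ring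
    rw [hc0] at H
    rw [H]
    simp
  -- equation family from (e_j, x), middle j
  have h6 : ∀ j, 1 ≤ j → j ≤ n-2 → ∀ c : ℕ,
      ((j:ℂ)+1-(n:ℂ)) * cf (d (ev (n+1) j)) c =
        (if c = 0 then cf (d (ev (n+1) j)) 0
         else if c < n then ((c:ℂ)+1-(n:ℂ)) * cf (d (ev (n+1) j)) c
            + (if c = n-1 then cf (d (ev (n+1) j)) n else 0)
         else 0)
        + β * cf (ev (n+1) (j+1)) c := by
    intro j h1j h2j c
    have H := hd (ev (n+1) j) (ev (n+1) n)
    rw [brjn hn j h1j (by omega), map_smul, hD, r3br_add_right, r3br_smul_right,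
      r3br_smul_right, brj0 hn j h1j h2j,
      brjk hn j (n-1) h1j (by omega) (by omega) (by omega), smul_zero, add_zero] at H
    have H2 := congrArg (fun w => cf w c) H
    simpa only [cf_add, cf_smul, cfr_evn_right hn] using H2
  have hcastne : ∀ a b : ℕ, a ≠ b → (a:ℂ) - (b:ℂ) ≠ 0 := by
    intro a b hab hh
    exact hab (Nat.cast_injective (by linear_combination hh : (a:ℂ) = (b:ℂ)))
  have hE0 : ∀ j, 1 ≤ j → j ≤ n-2 → cf (d (ev (n+1) j)) 0 = 0 := by
    intro j h1j h2j
    have h := h6 j h1j h2j 0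
    rw [if_pos rfl, cf_ev, if_neg (by omega : ¬(0 = j+1 ∧ 0 < n+1))] at h
    have h0 : ((j:ℂ) - (n:ℂ)) * cf (d (ev (n+1) j)) 0 = 0 := by linear_combination h
    rcases mul_eq_zero.mp h0 with h' | h'
    · exact absurd h' (hcastne j n (by omega))
    · exact h'
  have hEn : ∀ j, 1 ≤ j → j ≤ n-2 → cf (d (ev (n+1) j)) n = 0 := by
    intro j h1j h2j
    have h := h6 j h1j h2j n
    rw [if_neg (by omega : ¬ n = 0), if_neg (by omega : ¬ n < n), cf_ev,
      if_neg (by omega : ¬(n = j+1 ∧ n < n+1))] at h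
    have h0 : ((j:ℂ)+1-(n:ℂ)) * cf (d (ev (n+1) j)) n = 0 := by linear_combination h
    rcases mul_eq_zero.mp h0 with h' | h'
    · exfalso
      exact (by omega : ¬ j + 1 = n)
        (Nat.cast_injective (by push_cast; linear_combination h' : ((j+1:ℕ):ℂ) = (n:ℂ)))
    · exact h'
  have hEmid : ∀ j, 1 ≤ j → j ≤ n-2 → ∀ c, 1 ≤ c → c ≤ n-1 → c ≠ j → c ≠ j+1 →
      cf (d (ev (n+1) j)) c = 0 := by
    intro j h1j h2j c hc1 hc2 hcj hcj1
    have h := h6 j h1j h2j c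
    rw [if_neg (by omega : ¬ c = 0), if_pos (by omega : c < n), cf_ev,
      if_neg (by omega : ¬(c = j+1 ∧ c < n+1))] at h
    by_cases hcl : c = n-1
    · rw [if_pos hcl, hEn j h1j h2j] at h
      have h0 : ((j:ℂ) - (c:ℂ)) * cf (d (ev (n+1) j)) c = 0 := by linear_combination h
      rcases mul_eq_zero.mp h0 with h' | h'
      · exact absurd h' (hcastne j c (by omega))
      · exact h'
    · rw [if_neg hcl] at h
      have h0 : ((j:ℂ) - (c:ℂ)) * cf (d (ev (n+1) j)) c = 0 := by linear_combination h
      rcases mul_eq_zero.mp h0 with h' | h'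
      · exact absurd h' (hcastne j c (by omega))
      · exact h'
  have hEj1 : ∀ j, 1 ≤ j → j ≤ n-2 → cf (d (ev (n+1) j)) (j+1) = -β := by
    intro j h1j h2j
    have h := h6 j h1j h2j (j+1)
    rw [if_neg (by omega : ¬ j+1 = 0), if_pos (by omega : j+1 < n), cf_ev,
      if_pos (⟨rfl, by omega⟩ : j+1 = j+1 ∧ j+1 < n+1)] at h
    by_cases hcl : j+1 = n-1
    · rw [if_pos hcl, hEn j h1j h2j] at h
      push_cast at h
      linear_combination -h
    · rw [if_neg hcl] at h
      push_cast at h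
      linear_combination -h
  have hB' : ∀ j, 1 ≤ j → j ≤ n-2 →
      d (ev (n+1) j) = cf (d (ev (n+1) j)) j • ev (n+1) j + (-β) • ev (n+1) (j+1) := by
    intro j h1j h2j
    apply ext_cf; intro c
    rw [cf_add, cf_smul, cf_smul, cf_ev, cf_ev]
    rcases (by omega : c = 0 ∨ c = j ∨ c = j+1 ∨ (1 ≤ c ∧ c ≤ n-1 ∧ c ≠ j ∧ c ≠ j+1)
        ∨ c = n ∨ n+1 ≤ c) with rfl | rfl | rfl | ⟨u1,u2,u3,u4⟩ | rfl | hge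
    · rw [hE0 j h1j h2j, if_neg (by omega), if_neg (by omega)]; ring
    · rw [if_pos ⟨rfl, by omega⟩, if_neg (by omega)]; ring
    · rw [hEj1 j h1j h2j, if_neg (by omega), if_pos ⟨rfl, by omega⟩]; ring
    · rw [hEmid j h1j h2j c u1 u2 u3 u4, if_neg (by omega), if_neg (by omega)]; ring
    · rw [hEn j h1j h2j, if_neg (by omega), if_neg (by omega)]; ring
    · rw [cf_ge _ (by omega : n+1 ≤ c), if_neg (by omega), if_neg (by omega)]; ring
  -- recursion on the diagonal
  have hrec : ∀ j, 1 ≤ j → j ≤ n-3 →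
      cf (d (ev (n+1) (j+1))) (j+1) = cf (d (ev (n+1) j)) j + α := by
    intro j h1j h2j
    have H := hd (ev (n+1) j) (ev (n+1) 0)
    rw [brj0 hn j h1j (by omega), hB' j h1j (by omega), hA, r3br_add_left,
      r3br_smul_left, r3br_smul_left, r3br_smul_right,
      brj0 hn j h1j (by omega), brj0 hn (j+1) (by omega) (by omega)] at H
    have H2 := congrArg (fun w => cf w (j+1)) H
    simp only [cf_add, cf_smul, cf_ev] at H2
    rw [if_pos (⟨trivial, by omega⟩ : True ∧ j+1 < n+1),
      if_neg (by omega : ¬(j+1 = j+1+1 ∧ j+1 < n+1))] at H2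
    linear_combination H2
  have hdiagl : cf (d (ev (n+1) (n-2))) (n-2) = -α := by
    have H := hd (ev (n+1) (n-2)) (ev (n+1) 0)
    rw [brj0 hn (n-2) (by omega) (by omega), show n-2+1 = n-1 by omega, hC,
      hB' (n-2) (by omega) (by omega), hA, r3br_add_left,
      r3br_smul_left, r3br_smul_left, r3br_smul_right,
      brj0 hn (n-2) (by omega) (by omega), show n-2+1 = n-1 by omega, brl0 hn] at H
    have H2 := congrArg (fun w => cf w (n-1)) H
    simp only [cf_add, cf_smul, cf_zero, cf_ev] at H2
    rw [if_pos (⟨trivial, by omega⟩ : True ∧ n-1 < n+1)] at H2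
    linear_combination -H2
  have hdiag : ∀ t j, 1 ≤ j → j + t = n-2 →
      cf (d (ev (n+1) j)) j = ((j:ℂ)+1-(n:ℂ)) * α := by
    intro t
    induction t with
    | zero =>
      intro j h1j hjt
      have hj : j = n-2 := by omega
      subst hj
      rw [hdiagl]
      have : ((n-2:ℕ):ℂ) = (n:ℂ) - 2 := by
        rw [Nat.cast_sub (by omega : 2 ≤ n)]; norm_num
      rw [this]; ring
    | succ t ih =>
      intro j h1j hjt
      have h' := ih (j+1) (by omega) (by omega)
      have hr := hrec j h1j (by omega)
      rw [h'] at hr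
      push_cast at hr
      linear_combination -hr
  have hB : ∀ j, 1 ≤ j → j ≤ n-2 →
      d (ev (n+1) j) = (((j:ℂ)+1-(n:ℂ)) * α) • ev (n+1) j + (-β) • ev (n+1) (j+1) := by
    intro j h1j h2j
    rw [hB' j h1j h2j, hdiag (n-2-j) j h1j (by omega)]
  -- assemble
  apply LinearMap.ext; intro u
  conv_lhs => rw [ev_decomp n u]
  conv_rhs => rw [ev_decomp n u]
  rw [map_sum, map_sum]
  refine Finset.sum_congr rfl fun k _ => ?_
  rw [map_smul, map_smul]
  congr 1
  simp only [LinearMap.add_apply, LinearMap.smul_apply]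
  rcases (by omega : (k:ℕ) = 0 ∨ (1 ≤ (k:ℕ) ∧ (k:ℕ) ≤ n-2) ∨ (k:ℕ) = n-1 ∨ (k:ℕ) = n)
    with hk | ⟨hk1, hk2⟩ | hk | hk
  · rw [hk, hA, d1_ev0 hn, d2_ev0 hn, d3_evj hn 0 (by omega)]
    simp
  · rw [hB (k:ℕ) hk1 hk2, d1_evj hn (k:ℕ) hk1 hk2, d2_evj hn (k:ℕ) hk1 hk2,
      d3_evj hn (k:ℕ) (by omega)]
    rw [smul_smul, smul_zero, add_zero, smul_neg, ← neg_smul,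
      mul_comm α (((k:ℕ):ℂ) + 1 - (n:ℂ))]
  · rw [hk, hC, d1_evl hn, d2_evl hn, d3_evj hn (n-1) (by omega)]
    simp
  · rw [hk, hD, d1_evn hn, d2_evn hn, d3_evn hn]
    simp

end classify

lemma r3br_zero_left (n : ℕ) (v : Fin (n+1) → ℂ) : r3br n 0 v = 0 := by
  funext k; simp only [r3br, cf_zero, Pi.zero_apply]; split_ifs <;> ring

lemma r3br_zero_right (n : ℕ) (u : Fin (n+1) → ℂ) : r3br n u 0 = 0 := by
  funext k; simp only [r3br, cf_zero, Pi.zero_apply]; split_ifs <;> ring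

end R3Aux

open R3Aux

/-- For `n ≥ 4`, the space of derivations of `R_3` is 3-dimensional, spanned by
`d₁` (`d₁(e_1)=e_1`, `d₁(e_i)=(i-n)e_i` for `2 ≤ i ≤ n-1`), `d₂` (`d₂(x)=e_1`,
`d₂(e_i)=-e_{i+1}` for `2 ≤ i ≤ n-1`), and `d₃` (`d₃(x)=e_n`). -/
theorem r3_derivations (n : ℕ) (hn : 4 ≤ n) :
    ∃ D1 D2 D3 : (Fin (n + 1) → ℂ) →ₗ[ℂ] (Fin (n + 1) → ℂ),
      D1 (ev (n + 1) 0) = ev (n + 1) 0 ∧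
      (∀ i : ℕ, 2 ≤ i → i ≤ n - 1 →
        D1 (ev (n + 1) (i - 1)) = ((i : ℂ) - (n : ℂ)) • ev (n + 1) (i - 1)) ∧
      D1 (ev (n + 1) (n - 1)) = 0 ∧ D1 (ev (n + 1) n) = 0 ∧
      D2 (ev (n + 1) n) = ev (n + 1) 0 ∧
      (∀ i : ℕ, 2 ≤ i → i ≤ n - 1 → D2 (ev (n + 1) (i - 1)) = -(ev (n + 1) i)) ∧
      D2 (ev (n + 1) 0) = 0 ∧ D2 (ev (n + 1) (n - 1)) = 0 ∧
      D3 (ev (n + 1) n) = ev (n + 1) (n - 1) ∧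
      (∀ j : ℕ, j ≤ n - 1 → D3 (ev (n + 1) j) = 0) ∧
      LinearIndependent ℂ ![D1, D2, D3] ∧
      ∀ d : (Fin (n + 1) → ℂ) →ₗ[ℂ] (Fin (n + 1) → ℂ),
        (∀ a b : Fin (n + 1) → ℂ, d (r3br n a b) = r3br n (d a) b + r3br n a (d b)) ↔
          d ∈ Submodule.span ℂ {D1, D2, D3} := by
  refine ⟨d1map n, d2map n, d3map n, d1_ev0 hn, ?_, d1_evl hn, d1_evn hn,
    d2_evn hn, ?_, d2_ev0 hn, d2_evl hn, d3_evn hn, fun j hj => d3_evj hn j hj,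
    ?_, ?_⟩
  · intro i h1 h2
    rw [d1_evj hn (i-1) (by omega) (by omega)]
    congr 1
    rw [Nat.cast_sub (by omega : 1 ≤ i)]
    ring
  · intro i h1 h2
    rw [d2_evj hn (i-1) (by omega) (by omega), show i-1+1 = i by omega]
  · -- linear independence
    rw [Fintype.linearIndependent_iff]
    intro g hg
    have hsum : g 0 • d1map n + g 1 • d2map n + g 2 • d3map n = 0 := by
      have := hg
      simpa [Fin.sum_univ_three] using this
    have key : ∀ (x : Fin (n+1) → ℂ) (c : ℕ),
        g 0 * cf (d1map n x) c + g 1 * cf (d2map n x) c + g 2 * cf (d3map n x) c = 0 := by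
      intro x c
      have h := congrArg (fun w => cf w c) (DFunLike.congr_fun hsum x)
      simpa only [LinearMap.add_apply, LinearMap.smul_apply, LinearMap.zero_apply,
        cf_add, cf_smul, cf_zero] using h
    have e0 : g 0 = 0 := by
      have h := key (ev (n+1) 0) 0
      rw [d1_ev0 hn, d2_ev0 hn, d3_evj hn 0 (by omega), cf_zero, cf_ev,
        if_pos (⟨rfl, by omega⟩ : (0:ℕ) = 0 ∧ 0 < n+1)] at h
      linear_combination h
    have e1 : g 1 = 0 := by
      have h := key (ev (n+1) n) 0
      rw [d1_evn hn, d2_evn hn, d3_evn hn, cf_zero, cf_ev, cf_ev,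
        if_pos (⟨rfl, by omega⟩ : (0:ℕ) = 0 ∧ 0 < n+1),
        if_neg (by omega : ¬((0:ℕ) = n-1 ∧ 0 < n+1))] at h
      linear_combination h
    have e2 : g 2 = 0 := by
      have h := key (ev (n+1) n) (n-1)
      rw [d1_evn hn, d2_evn hn, d3_evn hn, cf_zero, cf_ev, cf_ev,
        if_neg (by omega : ¬(n-1 = 0 ∧ n-1 < n+1)),
        if_pos (⟨rfl, by omega⟩ : n-1 = n-1 ∧ n-1 < n+1)] at h
      linear_combination h
    intro i
    fin_cases i
    · exact e0
    · exact e1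
    · exact e2
  · -- characterization of derivations
    intro d
    constructor
    · intro hd
      rw [classify hn d hd]
      refine Submodule.add_mem _ (Submodule.add_mem _
        (Submodule.smul_mem _ _ (Submodule.subset_span ?_))
        (Submodule.smul_mem _ _ (Submodule.subset_span ?_)))
        (Submodule.smul_mem _ _ (Submodule.subset_span ?_))
      · exact Set.mem_insert _ _
      · exact Set.mem_insert_of_mem _ (Set.mem_insert _ _)
      · exact Set.mem_insert_of_mem _ (Set.mem_insert_of_mem _ rfl)
    · intro hd
      have main : ∀ x ∈ Submodule.span ℂ ({d1map n, d2map n, d3map n} :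
          Set ((Fin (n + 1) → ℂ) →ₗ[ℂ] (Fin (n + 1) → ℂ))),
          ∀ a b, x (r3br n a b) = r3br n (x a) b + r3br n a (x b) := by
        intro x hx
        induction hx using Submodule.span_induction with
        | mem y hy =>
          rcases hy with rfl | rfl | rfl
          · exact der1 n hn
          · exact der2 n hn
          · exact der3 n hn
        | zero =>
          intro a b
          simp [r3br_zero_left, r3br_zero_right]
        | add f g' hf hg ihf ihg =>
          intro a b
          simp only [LinearMap.add_apply, r3br_add_left, r3br_add_right, ihf, ihg]
          abel
        | smul c f hf ihf =>
          intro a b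
          simp only [LinearMap.smul_apply, r3br_smul_left, r3br_smul_right, ihf]
          rw [smul_add]
      exact main d hd
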